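/- arXiv:2109.01786 — 4 statements merged into one kernel-verified Lean document; each statement's English description precedes it below -/
import Mathlib

section
/- Let L and E be normed spaces with a norm on L ⊗ E satisfying the contractibility property ‖a · u‖ ≤ ‖a‖‖u‖ for all a ∈ B(L). Define ‖e‖_E := ‖ξ ⊗ e‖ for some (any) unit vector ξ ∈ L. Then the norm on L ⊗ E is a cross-norm with respect to ‖·‖_L and ‖·‖_E: ‖ξ ⊗ e‖ = ‖ξ‖‖e‖_E for all ξ ∈ L, e ∈ E. -/
/-!
By Hahn–Banach there are rank-one operators `a ξ₀ = ξ` with `‖a‖ = ‖ξ‖` and `b ξ = ‖ξ‖ • ξ₀`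
with `‖b‖ = 1`; contractivity applied to `a` and `b` gives the two opposite inequalities.
-/

open TensorProduct

theorem ContinuousLinearMap.exists_norm_eq_apply_eq_norm_smul {𝕜 E F : Type*} [RCLike 𝕜]
    [NormedAddCommGroup E] [NormedSpace 𝕜 E] [Nontrivial E]
    [NormedAddCommGroup F] [NormedSpace 𝕜 F] (x : E) (y : F) :
    ∃ a : E →L[𝕜] F, ‖a‖ = ‖y‖ ∧ a x = (‖x‖ : 𝕜) • y := by
  obtain ⟨g, hg_norm, hg_apply⟩ := exists_dual_vector' 𝕜 x
  exact ⟨g.smulRight y, by rw [norm_smulRight_apply, hg_norm, one_mul], by simp [hg_apply]⟩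

section Contractive

variable {L E : Type*} [NormedAddCommGroup L] [NormedSpace ℝ L] [Nontrivial L]
  [AddCommGroup E] [Module ℝ E] {N : L ⊗[ℝ] E → ℝ}

theorem norm_mul_le_norm_mul_of_contractive
    (hsmul : ∀ (c : ℝ) u, N (c • u) = |c| * N u)
    (hcontr : ∀ (a : L →L[ℝ] L) (u : L ⊗[ℝ] E),
      N (LinearMap.rTensor E (a : L →ₗ[ℝ] L) u) ≤ ‖a‖ * N u)
    (x y : L) (e : E) :
    ‖x‖ * N (y ⊗ₜ e) ≤ ‖y‖ * N (x ⊗ₜ e) := by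
  obtain ⟨a, ha_norm, ha_apply⟩ :=
    ContinuousLinearMap.exists_norm_eq_apply_eq_norm_smul (𝕜 := ℝ) x y
  have h := hcontr a (x ⊗ₜ e)
  rwa [LinearMap.rTensor_tmul, ContinuousLinearMap.coe_coe, ha_apply, RCLike.ofReal_real_eq_id, id,
    ← smul_tmul', hsmul, abs_norm, ha_norm] at h

end Contractive

theorem stmt1_general {L E : Type*} [NormedAddCommGroup L] [NormedSpace ℝ L]
    [NormedAddCommGroup E] [NormedSpace ℝ E]
    (N : TensorProduct ℝ L E → ℝ)
    (hsmul : ∀ (c : ℝ) u, N (c • u) = |c| * N u)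
    (hcontr : ∀ (a : L →L[ℝ] L) (u : TensorProduct ℝ L E),
      N (LinearMap.rTensor E (a : L →ₗ[ℝ] L) u) ≤ ‖a‖ * N u)
    (ξ₀ : L) (hξ₀ : ‖ξ₀‖ = 1) :
    ∀ (ξ : L) (e : E), N (ξ ⊗ₜ[ℝ] e) = ‖ξ‖ * N (ξ₀ ⊗ₜ[ℝ] e) := by
  intro ξ e
  have : Nontrivial L := nontrivial_of_ne ξ₀ 0 (ne_zero_of_norm_ne_zero (by simp [hξ₀]))
  have hle := norm_mul_le_norm_mul_of_contractive hsmul hcontr ξ₀ ξ e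
  have hge := norm_mul_le_norm_mul_of_contractive hsmul hcontr ξ ξ₀ e
  rw [hξ₀, one_mul] at hle hge
  exact le_antisymm hle hge

/-- A norm on `L ⊗ E` with the contractibility property is a cross-norm:
defining `‖e‖_E := ‖ξ₀ ⊗ e‖` for a fixed unit vector `ξ₀ ∈ L`, one has
`‖ξ ⊗ e‖ = ‖ξ‖ * ‖e‖_E` for all `ξ ∈ L`, `e ∈ E`. -/
theorem stmt1 {L E : Type*} [NormedAddCommGroup L] [NormedSpace ℝ L]
    [NormedAddCommGroup E] [NormedSpace ℝ E]
    (N : TensorProduct ℝ L E → ℝ)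
    (hadd : ∀ u v, N (u + v) ≤ N u + N v)
    (hsmul : ∀ (c : ℝ) u, N (c • u) = |c| * N u)
    (hdef : ∀ u, N u = 0 ↔ u = 0)
    (hcontr : ∀ (a : L →L[ℝ] L) (u : TensorProduct ℝ L E),
      N (LinearMap.rTensor E (a : L →ₗ[ℝ] L) u) ≤ ‖a‖ * N u)
    (ξ₀ : L) (hξ₀ : ‖ξ₀‖ = 1) :
    ∀ (ξ : L) (e : E), N (ξ ⊗ₜ[ℝ] e) = ‖ξ‖ * N (ξ₀ ⊗ₜ[ℝ] e) :=
  stmt1_general N hsmul hcontr ξ₀ hξ₀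
end

section
/- Let Z be a finite-dimensional contractively complemented subspace of a normed space L, via a contractive projection Q : L → Z. Let E be a vector space and suppose L ⊗ E carries a norm satisfying the contractibility property. For u ∈ L ⊗ E define I(u) : Z* → E by I(u)(g) = (g ⊗ 1_E)(Q · u). Then for every v ∈ L ⊗ Z* (with the injective tensor norm) and u ∈ L ⊗ E one has ‖(I(u) applied slot-wise to v)‖ ≤ ‖v‖_ε · ‖Q · u‖, i.e., the operator 1_L ⊗ I(u) : L ⊗_ε Z* → L ⊗ E has norm at most ‖Q · u‖. -/
open TensorProduct
set_option synthInstance.maxHeartbeats 1000000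
set_option maxHeartbeats 1000000

/-- The injective tensor norm on the algebraic tensor product of two normed spaces. -/
noncomputable def injNorm (L E : Type*) [NormedAddCommGroup L] [NormedSpace ℝ L]
    [NormedAddCommGroup E] [NormedSpace ℝ E] (u : TensorProduct ℝ L E) : ℝ :=
  ⨆ fg : Metric.closedBall (0 : L →L[ℝ] ℝ) 1 × Metric.closedBall (0 : E →L[ℝ] ℝ) 1,
    |TensorProduct.lid ℝ ℝ
      (TensorProduct.map ((fg.1 : L →L[ℝ] ℝ) : L →ₗ[ℝ] ℝ)
        ((fg.2 : E →L[ℝ] ℝ) : E →ₗ[ℝ] ℝ) u)|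

section inj
variable {L E : Type*} [NormedAddCommGroup L] [NormedSpace ℝ L]
  [NormedAddCommGroup E] [NormedSpace ℝ E]

lemma pair_bound (v : TensorProduct ℝ L E) :
    ∃ M : ℝ, ∀ (f : L →L[ℝ] ℝ) (g : E →L[ℝ] ℝ), ‖f‖ ≤ 1 → ‖g‖ ≤ 1 →
      |TensorProduct.lid ℝ ℝ (TensorProduct.map (f : L →ₗ[ℝ] ℝ) (g : E →ₗ[ℝ] ℝ) v)| ≤ M := by
  obtain ⟨S, rfl⟩ := TensorProduct.exists_finset v
  refine ⟨∑ p ∈ S, ‖p.1‖ * ‖p.2‖, fun f g hf hg => ?_⟩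
  rw [map_sum, map_sum]
  refine (Finset.abs_sum_le_sum_abs _ _).trans (Finset.sum_le_sum fun p _ => ?_)
  simp only [TensorProduct.map_tmul, TensorProduct.lid_tmul, smul_eq_mul,
    ContinuousLinearMap.coe_coe, abs_mul]
  calc |f p.1| * |g p.2| ≤ (‖f‖ * ‖p.1‖) * (‖g‖ * ‖p.2‖) := by
        exact mul_le_mul (f.le_opNorm p.1) (g.le_opNorm p.2) (abs_nonneg _)
          (by positivity)
    _ ≤ ‖p.1‖ * ‖p.2‖ := by
        have := mul_le_mul (mul_le_mul_of_nonneg_right hf (norm_nonneg p.1))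
          (mul_le_mul_of_nonneg_right hg (norm_nonneg p.2)) (by positivity) (by positivity)
        simpa using this

lemma injNorm_bdd (v : TensorProduct ℝ L E) :
    BddAbove (Set.range fun fg : Metric.closedBall (0 : L →L[ℝ] ℝ) 1 ×
        Metric.closedBall (0 : E →L[ℝ] ℝ) 1 =>
      |TensorProduct.lid ℝ ℝ
        (TensorProduct.map ((fg.1 : L →L[ℝ] ℝ) : L →ₗ[ℝ] ℝ)
          ((fg.2 : E →L[ℝ] ℝ) : E →ₗ[ℝ] ℝ) v)|) := by
  obtain ⟨M, hM⟩ := pair_bound v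
  refine ⟨M, Set.forall_mem_range.2 fun fg => hM _ _ ?_ ?_⟩
  · simpa [dist_zero_right] using Metric.mem_closedBall.1 fg.1.2
  · simpa [dist_zero_right] using Metric.mem_closedBall.1 fg.2.2

lemma le_injNorm (v : TensorProduct ℝ L E)
    (f : Metric.closedBall (0 : L →L[ℝ] ℝ) 1) (g : Metric.closedBall (0 : E →L[ℝ] ℝ) 1) :
    |TensorProduct.lid ℝ ℝ
        (TensorProduct.map ((f : L →L[ℝ] ℝ) : L →ₗ[ℝ] ℝ)
          ((g : E →L[ℝ] ℝ) : E →ₗ[ℝ] ℝ) v)| ≤ injNorm L E v := by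
  rw [injNorm]
  exact le_ciSup (injNorm_bdd v) (f, g)

lemma injNorm_nonneg (v : TensorProduct ℝ L E) : 0 ≤ injNorm L E v :=
  Real.iSup_nonneg fun _ => abs_nonneg _

lemma pairing_le (v : TensorProduct ℝ L E) (f : L →L[ℝ] ℝ) (g : E →L[ℝ] ℝ) :
    |TensorProduct.lid ℝ ℝ (TensorProduct.map (f : L →ₗ[ℝ] ℝ) (g : E →ₗ[ℝ] ℝ) v)| ≤
      ‖f‖ * ‖g‖ * injNorm L E v := by
  rcases eq_or_ne f 0 with rfl | hf
  · rw [show ((0 : L →L[ℝ] ℝ) : L →ₗ[ℝ] ℝ) = 0 from rfl, TensorProduct.map_zero_left,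
      LinearMap.zero_apply, map_zero, abs_zero, norm_zero, zero_mul, zero_mul]
  rcases eq_or_ne g 0 with rfl | hg
  · rw [show ((0 : E →L[ℝ] ℝ) : E →ₗ[ℝ] ℝ) = 0 from rfl, TensorProduct.map_zero_right,
      LinearMap.zero_apply, map_zero, abs_zero, norm_zero, mul_zero, zero_mul]
  have hfn : 0 < ‖f‖ := norm_pos_iff.2 hf
  have hgn : 0 < ‖g‖ := norm_pos_iff.2 hg
  set f' : L →L[ℝ] ℝ := ‖f‖⁻¹ • f with hf'
  set g' : E →L[ℝ] ℝ := ‖g‖⁻¹ • g with hg'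
  have hfe : ‖f'‖ ≤ 1 := by
    refine ContinuousLinearMap.opNorm_le_bound _ zero_le_one fun x => ?_
    rw [hf', ContinuousLinearMap.smul_apply, norm_smul, norm_inv, norm_norm, one_mul,
      inv_mul_le_iff₀ hfn]
    exact f.le_opNorm x
  have hge : ‖g'‖ ≤ 1 := by
    refine ContinuousLinearMap.opNorm_le_bound _ zero_le_one fun x => ?_
    rw [hg', ContinuousLinearMap.smul_apply, norm_smul, norm_inv, norm_norm, one_mul,
      inv_mul_le_iff₀ hgn]
    exact g.le_opNorm x
  have hf1 : f' ∈ Metric.closedBall (0 : L →L[ℝ] ℝ) 1 := by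
    simp [Metric.mem_closedBall, dist_zero_right, hfe]
  have hg1 : g' ∈ Metric.closedBall (0 : E →L[ℝ] ℝ) 1 := by
    simp [Metric.mem_closedBall, dist_zero_right, hge]
  have hkey : |TensorProduct.lid ℝ ℝ (TensorProduct.map (f' : L →ₗ[ℝ] ℝ)
      (g' : E →ₗ[ℝ] ℝ) v)| ≤ injNorm L E v := le_injNorm v ⟨f', hf1⟩ ⟨g', hg1⟩
  have heq : TensorProduct.lid ℝ ℝ (TensorProduct.map (f : L →ₗ[ℝ] ℝ)
      (g : E →ₗ[ℝ] ℝ) v) = (‖f‖ * ‖g‖) *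
      TensorProduct.lid ℝ ℝ (TensorProduct.map (f' : L →ₗ[ℝ] ℝ) (g' : E →ₗ[ℝ] ℝ) v) := by
    have : ((f : L →ₗ[ℝ] ℝ)) = ‖f‖ • (f' : L →ₗ[ℝ] ℝ) := by
      rw [hf']; ext x; simp [smul_smul, mul_inv_cancel₀ hfn.ne']
    have h2 : ((g : E →ₗ[ℝ] ℝ)) = ‖g‖ • (g' : E →ₗ[ℝ] ℝ) := by
      rw [hg']; ext x; simp [smul_smul, mul_inv_cancel₀ hgn.ne']
    rw [this, h2, TensorProduct.map_smul_left, TensorProduct.map_smul_right,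
      LinearMap.smul_apply, LinearMap.smul_apply, map_smul, map_smul, smul_eq_mul, smul_eq_mul]
    ring
  rw [heq, abs_mul, abs_of_pos (by positivity : (0:ℝ) < ‖f‖ * ‖g‖)]
  exact mul_le_mul_of_nonneg_left hkey (by positivity)

end inj

/-- The operator `I(u) : Z* → E`, `g ↦ (g ⊗ 1_E)(Q · u)`, associated to
`u ∈ L ⊗ E` and a projection `Q` of `L` onto the subspace `Z`. -/
noncomputable def Imap {L E : Type*} [NormedAddCommGroup L] [NormedSpace ℝ L]
    [AddCommGroup E] [Module ℝ E] (Zsub : Submodule ℝ L)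
    (Q : L →L[ℝ] L) (hmem : ∀ ξ, Q ξ ∈ Zsub)
    (u : TensorProduct ℝ L E) : (Zsub →L[ℝ] ℝ) →ₗ[ℝ] E where
  toFun g := TensorProduct.lid ℝ E
    (TensorProduct.map
      ((g : Zsub →ₗ[ℝ] ℝ) ∘ₗ LinearMap.codRestrict Zsub (Q : L →ₗ[ℝ] L) hmem)
      LinearMap.id u)
  map_add' g g' := by
    simp only [ContinuousLinearMap.coe_add, LinearMap.add_comp,
      TensorProduct.map_add_left, LinearMap.add_apply, map_add]
  map_smul' c g := by
    simp only [ContinuousLinearMap.coe_smul, LinearMap.smul_comp,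
      TensorProduct.map_smul_left, LinearMap.smul_apply, map_smul, RingHom.id_apply]

lemma Imap_apply {L E : Type*} [NormedAddCommGroup L] [NormedSpace ℝ L]
    [AddCommGroup E] [Module ℝ E] (Zsub : Submodule ℝ L)
    (Q : L →L[ℝ] L) (hmem : ∀ ξ, Q ξ ∈ Zsub)
    (u : TensorProduct ℝ L E) (g : Zsub →L[ℝ] ℝ) :
    Imap Zsub Q hmem u g = TensorProduct.lid ℝ E
      (TensorProduct.map
        ((g : Zsub →ₗ[ℝ] ℝ) ∘ₗ LinearMap.codRestrict Zsub (Q : L →ₗ[ℝ] L) hmem)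
        LinearMap.id u) := rfl

section Jsec
variable {L Z : Type*} [NormedAddCommGroup L] [NormedSpace ℝ L]
  [NormedAddCommGroup Z] [NormedSpace ℝ Z]

/-- The canonical map `L ⊗ Z* →ₗ Hom(Z, L)`. -/
noncomputable def Jmap : TensorProduct ℝ L (Z →L[ℝ] ℝ) →ₗ[ℝ] (Z →ₗ[ℝ] L) :=
  TensorProduct.lift <| LinearMap.mk₂ ℝ
    (fun ξ (g : Z →L[ℝ] ℝ) => ((g : Z →ₗ[ℝ] ℝ)).smulRight ξ)
    (fun ξ ξ' g => by ext z; simp [smul_add])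
    (fun c ξ g => by
      ext z
      simp only [LinearMap.smulRight_apply, LinearMap.smul_apply]
      rw [smul_comm])
    (fun ξ g g' => by ext z; simp [add_smul])
    (fun c ξ g => by ext z; simp [mul_smul])

lemma Jmap_tmul (ξ : L) (g : Z →L[ℝ] ℝ) :
    Jmap (ξ ⊗ₜ[ℝ] g) = ((g : Z →ₗ[ℝ] ℝ)).smulRight ξ := rfl

/-- `f (J(v) z) = ⟨f ⊗ ev_z, v⟩`. -/
lemma Jmap_pairing (f : L →L[ℝ] ℝ) (z : Z) (v : TensorProduct ℝ L (Z →L[ℝ] ℝ)) :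
    f (Jmap v z) = TensorProduct.lid ℝ ℝ
      (TensorProduct.map (f : L →ₗ[ℝ] ℝ)
        ((ContinuousLinearMap.apply ℝ ℝ z : (Z →L[ℝ] ℝ) →L[ℝ] ℝ) :
          (Z →L[ℝ] ℝ) →ₗ[ℝ] ℝ) v) := by
  induction v using TensorProduct.induction_on with
  | zero => simp
  | tmul ξ g =>
      rw [Jmap_tmul, TensorProduct.map_tmul]
      simp only [LinearMap.smulRight_apply, map_smul, TensorProduct.lid_tmul,
        ContinuousLinearMap.coe_coe, ContinuousLinearMap.apply_apply, smul_eq_mul]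
      ring
  | add v1 v2 h1 h2 => rw [map_add, LinearMap.add_apply, map_add, map_add, map_add, h1, h2]

lemma Jmap_norm_le (v : TensorProduct ℝ L (Z →L[ℝ] ℝ)) (z : Z) :
    ‖Jmap v z‖ ≤ injNorm L (Z →L[ℝ] ℝ) v * ‖z‖ := by
  refine NormedSpace.norm_le_dual_bound ℝ _
    (mul_nonneg (injNorm_nonneg v) (norm_nonneg z)) fun f => ?_
  rw [Real.norm_eq_abs, Jmap_pairing]
  set ez : (Z →L[ℝ] ℝ) →L[ℝ] ℝ := ContinuousLinearMap.apply ℝ ℝ z with hez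
  have heznorm : ‖ez‖ ≤ ‖z‖ := by
    refine ContinuousLinearMap.opNorm_le_bound _ (norm_nonneg z) fun g => ?_
    calc ‖ez g‖ = ‖g z‖ := rfl
      _ ≤ ‖g‖ * ‖z‖ := g.le_opNorm z
      _ = ‖z‖ * ‖g‖ := mul_comm _ _
  calc |TensorProduct.lid ℝ ℝ (TensorProduct.map (f : L →ₗ[ℝ] ℝ)
        (ez : (Z →L[ℝ] ℝ) →ₗ[ℝ] ℝ) v)| ≤
      ‖f‖ * ‖ez‖ * injNorm L (Z →L[ℝ] ℝ) v := pairing_le v f ez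
    _ ≤ ‖f‖ * ‖z‖ * injNorm L (Z →L[ℝ] ℝ) v := by
        exact mul_le_mul_of_nonneg_right
          (mul_le_mul_of_nonneg_left heznorm (norm_nonneg f)) (injNorm_nonneg v)
    _ = injNorm L (Z →L[ℝ] ℝ) v * ‖z‖ * ‖f‖ := by ring

end Jsec

section main
variable {L E : Type*} [NormedAddCommGroup L] [NormedSpace ℝ L]
  [AddCommGroup E] [Module ℝ E]
  (Zsub : Submodule ℝ L)

/-- Key algebraic identity: `(1 ⊗ I(u))(v) = rTensor (J(v) ∘ Q̂) u`. -/
lemma key_identity (Q : L →L[ℝ] L) (hmem : ∀ ξ, Q ξ ∈ Zsub)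
    (u : TensorProduct ℝ L E) (v : TensorProduct ℝ L (Zsub →L[ℝ] ℝ)) :
    TensorProduct.map LinearMap.id (Imap Zsub Q hmem u) v =
      LinearMap.rTensor E
        ((Jmap v) ∘ₗ LinearMap.codRestrict Zsub (Q : L →ₗ[ℝ] L) hmem) u := by
  induction v using TensorProduct.induction_on with
  | zero =>
      rw [map_zero, map_zero, LinearMap.zero_comp, LinearMap.rTensor_zero,
        LinearMap.zero_apply]
  | tmul ξ g =>
      rw [TensorProduct.map_tmul, LinearMap.id_coe, id_eq, Jmap_tmul]
      induction u using TensorProduct.induction_on with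
      | zero =>
          have h0 : Imap Zsub Q hmem (0 : TensorProduct ℝ L E) g = 0 := by
            rw [Imap_apply, map_zero, map_zero]
          rw [h0, TensorProduct.tmul_zero, map_zero]
      | tmul η e =>
          rw [LinearMap.rTensor_tmul, Imap_apply, TensorProduct.map_tmul,
            LinearMap.id_coe, id_eq]
          simp only [LinearMap.comp_apply, LinearMap.codRestrict_apply,
            LinearMap.smulRight_apply, TensorProduct.lid_tmul]
          rw [TensorProduct.tmul_smul, TensorProduct.smul_tmul']
      | add u1 u2 h1 h2 =>
          have hI : Imap Zsub Q hmem (u1 + u2) g =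
              Imap Zsub Q hmem u1 g + Imap Zsub Q hmem u2 g := by
            rw [Imap_apply, Imap_apply, Imap_apply, map_add, map_add]
          rw [hI, TensorProduct.tmul_add, h1, h2, map_add]
  | add v1 v2 h1 h2 =>
      rw [map_add, map_add, h1, h2, LinearMap.add_comp, LinearMap.rTensor_add,
        LinearMap.add_apply]

end main

/-- Let `Z` be a finite-dimensional contractively complemented subspace of a
normed space `L` (contractive projection `Q`), and let `L ⊗ E` carry a norm with the
contractibility property. Then for every `u ∈ L ⊗ E` the operator
`1_L ⊗ I(u) : L ⊗_ε Z* → L ⊗ E` satisfies `‖(1_L ⊗ I(u))(v)‖ ≤ ‖v‖_ε · ‖Q · u‖`. -/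
theorem stmt12 {L E : Type*} [NormedAddCommGroup L] [NormedSpace ℝ L]
    [AddCommGroup E] [Module ℝ E]
    (Zsub : Submodule ℝ L) [FiniteDimensional ℝ Zsub]
    (Q : L →L[ℝ] L) (hQ1 : ‖Q‖ ≤ 1)
    (hmem : ∀ ξ, Q ξ ∈ Zsub) (hfix : ∀ z ∈ Zsub, Q z = z)
    (N : TensorProduct ℝ L E → ℝ)
    (hadd : ∀ u v, N (u + v) ≤ N u + N v)
    (hsmul : ∀ (c : ℝ) u, N (c • u) = |c| * N u)
    (hdef : ∀ u, N u = 0 ↔ u = 0)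
    (hcontr : ∀ (a : L →L[ℝ] L) (u : TensorProduct ℝ L E),
      N (LinearMap.rTensor E (a : L →ₗ[ℝ] L) u) ≤ ‖a‖ * N u) :
    ∀ (u : TensorProduct ℝ L E) (v : TensorProduct ℝ L (Zsub →L[ℝ] ℝ)),
      N (TensorProduct.map LinearMap.id (Imap Zsub Q hmem u) v) ≤
        injNorm L (Zsub →L[ℝ] ℝ) v * N (LinearMap.rTensor E (Q : L →ₗ[ℝ] L) u) := by
  intro u v
  have hN0 : N 0 = 0 := by simpa using hsmul 0 0
  have hNnn : ∀ w, 0 ≤ N w := by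
    intro w
    have h1 := hadd w (-w)
    rw [add_neg_cancel, hN0] at h1
    have h2 : N (-w) = N w := by simpa using hsmul (-1) w
    linarith
  set Jv : Zsub →ₗ[ℝ] L := Jmap v with hJv
  set aC : L →L[ℝ] L := (LinearMap.toContinuousLinearMap Jv).comp
    (Q.codRestrict Zsub hmem) with haC
  have hcoe : (aC : L →ₗ[ℝ] L) =
      Jv ∘ₗ LinearMap.codRestrict Zsub (Q : L →ₗ[ℝ] L) hmem := by
    ext η
    rfl
  have hfactor : ((aC : L →ₗ[ℝ] L) ∘ₗ (Q : L →ₗ[ℝ] L)) = (aC : L →ₗ[ℝ] L) := by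
    rw [hcoe]
    ext η
    simp only [LinearMap.comp_apply, LinearMap.codRestrict_apply,
      ContinuousLinearMap.coe_coe]
    congr 1
    exact Subtype.ext (by simpa using hfix _ (hmem η))
  have hkey : TensorProduct.map LinearMap.id (Imap Zsub Q hmem u) v =
      LinearMap.rTensor E (aC : L →ₗ[ℝ] L)
        (LinearMap.rTensor E (Q : L →ₗ[ℝ] L) u) := by
    rw [key_identity, ← hJv, ← hcoe]
    conv_lhs => rw [← hfactor]
    rw [LinearMap.rTensor_comp, LinearMap.comp_apply]
  have hnorm : ‖aC‖ ≤ injNorm L (Zsub →L[ℝ] ℝ) v := by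
    refine ContinuousLinearMap.opNorm_le_bound _
      (injNorm_nonneg (L := L) (E := Zsub →L[ℝ] ℝ) v) fun η => ?_
    set z : Zsub := Q.codRestrict Zsub hmem η with hzdef
    have hz : ‖z‖ ≤ ‖η‖ := by
      calc ‖z‖ = ‖Q η‖ := rfl
        _ ≤ ‖Q‖ * ‖η‖ := Q.le_opNorm η
        _ ≤ 1 * ‖η‖ := mul_le_mul_of_nonneg_right hQ1 (norm_nonneg η)
        _ = ‖η‖ := one_mul _
    have haCη : aC η = Jmap v z := rfl
    rw [haCη]
    calc ‖Jmap v z‖ ≤ injNorm L (Zsub →L[ℝ] ℝ) v * ‖z‖ := Jmap_norm_le v z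
      _ ≤ injNorm L (Zsub →L[ℝ] ℝ) v * ‖η‖ :=
          mul_le_mul_of_nonneg_left hz (injNorm_nonneg (L := L) (E := Zsub →L[ℝ] ℝ) v)
  calc N (TensorProduct.map LinearMap.id (Imap Zsub Q hmem u) v)
      = N (LinearMap.rTensor E (aC : L →ₗ[ℝ] L)
          (LinearMap.rTensor E (Q : L →ₗ[ℝ] L) u)) := by rw [hkey]
    _ ≤ ‖aC‖ * N (LinearMap.rTensor E (Q : L →ₗ[ℝ] L) u) := hcontr aC _
    _ ≤ injNorm L (Zsub →L[ℝ] ℝ) v * N (LinearMap.rTensor E (Q : L →ₗ[ℝ] L) u) :=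
        mul_le_mul_of_nonneg_right hnorm (hNnn _)
end

section
/- Let X be a σ-finite measure space, 1 ≤ p < ∞, and let E, G be L_p(X)-spaces. If τ : G → E is such that τ_∞ = 1_{L_p(X)} ⊗ τ maps the closed unit ball of L_p(X) ⊗ G onto the closed unit ball of L_p(X) ⊗ E, then τ_∞ restricted to L_p^0(X) ⊗ G maps its closed unit ball onto the closed unit ball of L_p^0(X) ⊗ E. -/
/-!
Given `u ∈ L_p^0(X) ⊗ E` with `NE u ≤ 1`, lift it to some `v` with `NG v ≤ 1` and replace `v`
by `(Q ⊗ 1) v`. Here `Q` averages over the atoms of finite measure of the finite algebra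
generated by the sets whose indicators span the first tensor factors of `u`. By Jensen's
inequality on each atom `Q` is a contraction of `L_p(X)`; it takes values in `L_p^0(X)` and
fixes the first factors of `u`. Since `Q ⊗ 1` commutes with `1 ⊗ τ`, the new lift still maps
to `u`.
-/

open MeasureTheory
open scoped ENNReal

/-- The subspace `L_p^0(X)` of simple functions: the span in `L_p(X)` of the
(classes of) characteristic functions of finite-measure measurable sets. -/
noncomputable def Lp0Sub {X : Type*} [MeasurableSpace X] (μ : Measure X)
    (p : ℝ≥0∞) [Fact (1 ≤ p)] : Submodule ℝ (Lp ℝ p μ) :=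
  Submodule.span ℝ
    {f | ∃ (s : Set X) (hs : MeasurableSet s) (hμ : μ s ≠ ∞),
      f = indicatorConstLp p hs hμ (1 : ℝ)}

open Function

theorem Set.apply_sum_indicator_of_pairwise_disjoint {X κ M N : Type*} [Fintype κ]
    [AddCommMonoid M] [AddCommMonoid N] {B : κ → Set X} (hB : Pairwise (Disjoint on B))
    (c : κ → M) {g : M → N} (hg : g 0 = 0) (x : X) :
    g (∑ k, (B k).indicator (fun _ => c k) x) = ∑ k, (B k).indicator (fun _ => g (c k)) x := by
  by_cases hx : ∃ k, x ∈ B k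
  · obtain ⟨k, hk⟩ := hx
    have hother : ∀ j ≠ k, x ∉ B j := fun j hjk hj => Set.disjoint_left.1 (hB hjk) hj hk
    rw [Fintype.sum_eq_single k fun j hj => Set.indicator_of_notMem (hother j hj) _,
      Fintype.sum_eq_single k fun j hj => Set.indicator_of_notMem (hother j hj) _,
      Set.indicator_of_mem hk, Set.indicator_of_mem hk]
  · simp only [not_exists] at hx
    simp [Set.indicator_of_notMem (hx _), hg]

namespace MeasureTheory

section Atoms

variable {X ι : Type*} (s : ι → Set X)

/-- The atom with sign pattern `σ`, except that the atom of the all-`false` pattern (the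
complement of `⋃ i, s i`, possibly of infinite measure) is replaced by `∅`. -/
def atom (σ : ι → Bool) : Set X :=
  {x | (∀ i, x ∈ s i ↔ σ i = true) ∧ ∃ i, x ∈ s i}

theorem atom_subset_iUnion (σ : ι → Bool) : atom s σ ⊆ ⋃ i, s i :=
  fun _ hx => Set.mem_iUnion.2 hx.2

theorem pairwise_disjoint_atom : Pairwise (Disjoint on atom s) := by
  refine fun σ τ hστ => Set.disjoint_left.2 fun x hσ hτ => hστ (funext fun i => ?_)
  exact Bool.eq_iff_iff.2 ((hσ.1 i).symm.trans (hτ.1 i))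

theorem eq_biUnion_atom [Fintype ι] [DecidableEq ι] (j : ι) :
    s j = ⋃ σ ∈ Finset.univ.filter (fun σ : ι → Bool => σ j = true), atom s σ := by
  classical
  ext x
  simp only [Finset.mem_filter, Finset.mem_univ, true_and, Set.mem_iUnion, exists_prop]
  refine ⟨fun hx => ⟨fun i => decide (x ∈ s i), by simpa using hx, fun i => by simp, j, hx⟩, ?_⟩
  rintro ⟨σ, hσj, hx, -⟩
  exact (hx j).2 hσj

variable [MeasurableSpace X]

theorem measurableSet_atom [Countable ι] (hs : ∀ i, MeasurableSet (s i)) (σ : ι → Bool) :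
    MeasurableSet (atom s σ) := by
  have hmem : ∀ i, Measurable fun x => x ∈ s i := fun i => measurableSet_setOfPred.1 (hs i)
  exact measurableSet_setOfPred.2
    ((Measurable.forall fun i => (hmem i).iff measurable_const).and (Measurable.exists hmem))

theorem measure_atom_ne_top {μ : Measure X} [Fintype ι] (hfin : ∀ i, μ (s i) ≠ ∞)
    (σ : ι → Bool) : μ (atom s σ) ≠ ∞ :=
  ne_top_of_le_ne_top (ne_top_of_le_ne_top (ENNReal.sum_ne_top.2 fun i _ => hfin i)
    (measure_iUnion_fintype_le μ s)) (measure_mono (atom_subset_iUnion s σ))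

end Atoms

variable {X : Type*} [MeasurableSpace X] {μ : Measure X}

theorem lintegral_enorm_average_rpow_le {E : Type*} [NormedAddCommGroup E] [NormedSpace ℝ E]
    [CompleteSpace E] (ν : Measure X) (f : X → E) {r : ℝ} (hr : 1 ≤ r) :
    ∫⁻ _, ‖⨍ x, f x ∂ν‖ₑ ^ r ∂ν ≤ ∫⁻ x, ‖f x‖ₑ ^ r ∂ν := by
  have hp : (1 : ℝ≥0∞) ≤ ENNReal.ofReal r := by simpa using ENNReal.ofReal_le_ofReal hr
  have hr0 : 0 < r := one_pos.trans_le hr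
  -- the average is the conditional expectation with respect to the trivial σ-algebra
  have h := eLpNorm_condExp_le_eLpNorm (m := ⊥) (μ := ν) f hp
  rw [eLpNorm_congr_ae (condExp_bot_ae_eq f), ← average_eq,
    eLpNorm_eq_lintegral_rpow_enorm_toReal (by positivity) ENNReal.ofReal_ne_top,
    eLpNorm_eq_lintegral_rpow_enorm_toReal (by positivity) ENNReal.ofReal_ne_top,
    ENNReal.toReal_ofReal hr0.le] at h
  exact (ENNReal.rpow_le_rpow_iff (by positivity)).1 h

section IndicatorConstLp

variable (p : ℝ≥0∞) {E : Type*} [NormedAddCommGroup E]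

theorem indicatorConstLp_eq_zero_of_measure_zero {s : Set X}
    (hs : MeasurableSet s) (hμs : μ s ≠ ∞) (h0 : μ s = 0) (c : E) :
    indicatorConstLp p hs hμs c = 0 := by
  refine Lp.ext ?_
  filter_upwards [indicatorConstLp_coeFn (p := p) (hs := hs) (hμs := hμs) (c := c),
    Lp.coeFn_zero E p μ, measure_eq_zero_iff_ae_notMem.1 h0] with x hind hzero hx
  rw [hind, hzero, Set.indicator_of_notMem hx, Pi.zero_apply]

theorem setAverage_indicatorConstLp_of_disjoint [NormedSpace ℝ E] {s t : Set X}
    (hs : MeasurableSet s) (hμs : μ s ≠ ∞) (ht : MeasurableSet t) (hst : Disjoint t s) (c : E) :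
    ⨍ x in t, indicatorConstLp p hs hμs c x ∂μ = 0 := by
  rw [setAverage_congr_fun ht (g := fun _ => 0) ?_, average_zero]
  filter_upwards [indicatorConstLp_coeFn_notMem (p := p) (hs := hs) (hμs := hμs) (c := c)]
    with x hx hxt using hx (Set.disjoint_left.1 hst hxt)

theorem setAverage_indicatorConstLp_self [NormedSpace ℝ E] [CompleteSpace E] {s : Set X}
    (hs : MeasurableSet s) (hμs : μ s ≠ ∞) (h0 : μ s ≠ 0) (c : E) :
    ⨍ x in s, indicatorConstLp p hs hμs c x ∂μ = c := by
  rw [setAverage_congr_fun hs (g := fun _ => c) indicatorConstLp_coeFn_mem, setAverage_const h0 hμs]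

theorem indicatorConstLp_eq_sum_of_eq_biUnion {κ : Type*} {B : κ → Set X}
    (hB : ∀ k, MeasurableSet (B k)) (hBfin : ∀ k, μ (B k) ≠ ∞) {s : Set X} (hs : MeasurableSet s)
    (hμs : μ s ≠ ∞) (t : Finset κ) (hdisj : Set.PairwiseDisjoint ↑t B) (hst : s = ⋃ k ∈ t, B k)
    (c : E) :
    indicatorConstLp p hs hμs c = ∑ k ∈ t, indicatorConstLp p (hB k) (hBfin k) c := by
  refine Lp.ext ?_
  filter_upwards [indicatorConstLp_coeFn (p := p) (hs := hs) (hμs := hμs) (c := c),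
    Lp.coeFn_fun_finsetSum t fun k => indicatorConstLp p (hB k) (hBfin k) c,
    (Filter.eventually_all_finset t).2 fun k _ =>
      indicatorConstLp_coeFn (p := p) (hs := hB k) (hμs := hBfin k) (c := c)]
    with x hind hsum hinds
  rw [hind, hsum, hst, Finset.indicator_biUnion_apply t B hdisj]
  exact Finset.sum_congr rfl fun k hk => (hinds k hk).symm

end IndicatorConstLp

section AveragingOp

variable (p : ℝ≥0∞) [Fact (1 ≤ p)]

noncomputable def setAverageLM {B : Set X} (hB : μ B ≠ ∞) : Lp ℝ p μ →ₗ[ℝ] ℝ where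
  toFun f := ⨍ x in B, f x ∂μ
  map_add' f g := by
    simp only [setAverage_eq, ← smul_add]
    rw [← integral_add (integrableOn_Lp_of_measure_ne_top f Fact.out hB)
      (integrableOn_Lp_of_measure_ne_top g Fact.out hB)]
    exact congrArg _ (integral_congr_ae (ae_restrict_of_ae (Lp.coeFn_add f g)))
  map_smul' c f := by
    simp only [setAverage_eq, RingHom.id_apply]
    rw [integral_congr_ae (ae_restrict_of_ae (Lp.coeFn_smul c f))]
    simp only [Pi.smul_apply, integral_smul, smul_comm c]

variable {κ : Type*} [Fintype κ] {B : κ → Set X} (hB : ∀ k, MeasurableSet (B k))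
  (hBfin : ∀ k, μ (B k) ≠ ∞)

noncomputable def averagingOp : Lp ℝ p μ →ₗ[ℝ] Lp ℝ p μ :=
  ∑ k, (setAverageLM p (hBfin k)).smulRight (indicatorConstLp p (hB k) (hBfin k) (1 : ℝ))

theorem averagingOp_apply (f : Lp ℝ p μ) :
    averagingOp p hB hBfin f =
      ∑ k, (⨍ x in B k, f x ∂μ) • indicatorConstLp p (hB k) (hBfin k) (1 : ℝ) := by
  simp [averagingOp, setAverageLM]

theorem averagingOp_mem_Lp0Sub (f : Lp ℝ p μ) : averagingOp p hB hBfin f ∈ Lp0Sub μ p := by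
  rw [averagingOp_apply]
  exact Submodule.sum_mem _ fun k _ =>
    Submodule.smul_mem _ _ (Submodule.subset_span ⟨B k, hB k, hBfin k, rfl⟩)

theorem coeFn_averagingOp (f : Lp ℝ p μ) :
    averagingOp p hB hBfin f =ᵐ[μ]
      fun x => ∑ k, (B k).indicator (fun _ => ⨍ y in B k, f y ∂μ) x := by
  have hterm : ∀ k, ⇑((⨍ y in B k, f y ∂μ) • indicatorConstLp p (hB k) (hBfin k) (1 : ℝ))
      =ᵐ[μ] (B k).indicator (fun _ => ⨍ y in B k, f y ∂μ) := fun k => by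
    filter_upwards [Lp.coeFn_smul (⨍ y in B k, f y ∂μ)
        (indicatorConstLp p (hB k) (hBfin k) (1 : ℝ)),
      indicatorConstLp_coeFn (p := p) (hs := hB k) (hμs := hBfin k) (c := (1 : ℝ))]
      with x hsmul hind
    by_cases hx : x ∈ B k <;> simp [hsmul, hind, hx]
  rw [averagingOp_apply]
  filter_upwards [Lp.coeFn_fun_finsetSum Finset.univ fun k =>
      (⨍ y in B k, f y ∂μ) • indicatorConstLp p (hB k) (hBfin k) (1 : ℝ), ae_all_iff.2 hterm]
    with x hsum hterm
  rw [hsum]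
  exact Finset.sum_congr rfl fun k _ => hterm k

theorem norm_averagingOp_le (hp : p ≠ ∞) (hdisj : Pairwise (Disjoint on B)) (f : Lp ℝ p μ) :
    ‖averagingOp p hB hBfin f‖ ≤ ‖f‖ := by
  have hp1 : 1 ≤ p := Fact.out
  have hp0 : p ≠ 0 := (one_pos.trans_le hp1).ne'
  have hr : 1 ≤ p.toReal := by simpa using ENNReal.toReal_mono hp hp1
  have hr0 : 0 < p.toReal := one_pos.trans_le hr
  set c : κ → ℝ := fun k => ⨍ y in B k, f y ∂μ
  have hpow : ∀ᵐ x ∂μ, ‖averagingOp p hB hBfin f x‖ₑ ^ p.toReal =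
      ∑ k, (B k).indicator (fun _ => ‖c k‖ₑ ^ p.toReal) x := by
    filter_upwards [coeFn_averagingOp p hB hBfin f] with x hx
    rw [hx]
    exact Set.apply_sum_indicator_of_pairwise_disjoint hdisj c (g := fun y => ‖y‖ₑ ^ p.toReal)
      (by simp [hr0]) x
  have hlint : ∫⁻ x, ‖averagingOp p hB hBfin f x‖ₑ ^ p.toReal ∂μ ≤
      ∫⁻ x, ‖f x‖ₑ ^ p.toReal ∂μ := calc
    _ = ∑ k, ∫⁻ _ in B k, ‖c k‖ₑ ^ p.toReal ∂μ := by
        rw [lintegral_congr_ae hpow,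
          lintegral_finsetSum _ fun k _ => measurable_const.indicator (hB k)]
        exact Finset.sum_congr rfl fun k _ => lintegral_indicator (hB k) _
    _ ≤ ∑ k, ∫⁻ x in B k, ‖f x‖ₑ ^ p.toReal ∂μ :=
        Finset.sum_le_sum fun k _ => lintegral_enorm_average_rpow_le _ _ hr
    _ = ∫⁻ x in ⋃ k, B k, ‖f x‖ₑ ^ p.toReal ∂μ := by
        rw [lintegral_iUnion hB hdisj, tsum_fintype]
    _ ≤ ∫⁻ x, ‖f x‖ₑ ^ p.toReal ∂μ := setLIntegral_le_lintegral _ _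
  rw [Lp.norm_def, Lp.norm_def]
  refine ENNReal.toReal_mono (Lp.eLpNorm_ne_top f) ?_
  rw [eLpNorm_eq_lintegral_rpow_enorm_toReal hp0 hp, eLpNorm_eq_lintegral_rpow_enorm_toReal hp0 hp]
  gcongr

theorem averagingOp_indicatorConstLp (hdisj : Pairwise (Disjoint on B)) (j : κ) :
    averagingOp p hB hBfin (indicatorConstLp p (hB j) (hBfin j) (1 : ℝ)) =
      indicatorConstLp p (hB j) (hBfin j) (1 : ℝ) := by
  rw [averagingOp_apply, Fintype.sum_eq_single j fun k hkj => by
    rw [setAverage_indicatorConstLp_of_disjoint p (hB j) (hBfin j) (hB k) (hdisj hkj), zero_smul]]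
  by_cases h0 : μ (B j) = 0
  · rw [indicatorConstLp_eq_zero_of_measure_zero p (hB j) (hBfin j) h0, smul_zero]
  · rw [setAverage_indicatorConstLp_self p (hB j) (hBfin j) h0, one_smul]

end AveragingOp

theorem exists_contraction_fixing_indicators {p : ℝ≥0∞} [Fact (1 ≤ p)] (hp : p ≠ ∞)
    {ι : Type*} [Fintype ι] (s : ι → Set X) (hs : ∀ i, MeasurableSet (s i))
    (hfin : ∀ i, μ (s i) ≠ ∞) :
    ∃ a : Lp ℝ p μ →L[ℝ] Lp ℝ p μ, ‖a‖ ≤ 1 ∧ (∀ f, a f ∈ Lp0Sub μ p) ∧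
      ∀ i, a (indicatorConstLp p (hs i) (hfin i) 1) = indicatorConstLp p (hs i) (hfin i) 1 := by
  classical
  let P := averagingOp p (measurableSet_atom s hs) (measure_atom_ne_top s hfin)
  have hdisj := pairwise_disjoint_atom s
  refine ⟨P.mkContinuous 1 fun f => (one_mul ‖f‖).symm ▸ norm_averagingOp_le p _ _ hp hdisj f,
    LinearMap.mkContinuous_norm_le _ zero_le_one _, averagingOp_mem_Lp0Sub p _ _, fun i => ?_⟩
  rw [LinearMap.mkContinuous_apply, indicatorConstLp_eq_sum_of_eq_biUnion p
    (measurableSet_atom s hs) (measure_atom_ne_top s hfin) (hs i) (hfin i) _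
    (hdisj.set_pairwise _) (eq_biUnion_atom s i), map_sum]
  exact Finset.sum_congr rfl fun σ _ => averagingOp_indicatorConstLp p _ _ hdisj σ

theorem exists_contraction_fixing_of_fg {p : ℝ≥0∞} [Fact (1 ≤ p)] (hp : p ≠ ∞)
    {J : Submodule ℝ (Lp ℝ p μ)} (hJ : J.FG) (hJle : J ≤ Lp0Sub μ p) :
    ∃ a : Lp ℝ p μ →L[ℝ] Lp ℝ p μ, ‖a‖ ≤ 1 ∧ (∀ f, a f ∈ Lp0Sub μ p) ∧ ∀ f ∈ J, a f = f := by
  obtain ⟨t, rfl⟩ := hJ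
  obtain ⟨T, hTind, htT⟩ :=
    Submodule.subset_span_finite_of_subset_span (Submodule.span_le.1 hJle)
  choose s hs hfin hsT using fun f : T => hTind f.2
  obtain ⟨a, ha1, hrange, hfix⟩ := exists_contraction_fixing_indicators hp s hs hfin
  have hspan : Submodule.span ℝ (T : Set (Lp ℝ p μ)) ≤
      LinearMap.eqLocus (a : Lp ℝ p μ →ₗ[ℝ] Lp ℝ p μ) LinearMap.id :=
    Submodule.span_le.2 fun f hf => by simpa [← hsT ⟨f, hf⟩] using hfix ⟨f, hf⟩
  exact ⟨a, ha1, hrange, fun f hf => hspan (Submodule.span_le.2 htT hf)⟩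

end MeasureTheory

namespace LinearMap

open TensorProduct

variable {R M M' N P : Type*} [CommSemiring R] [AddCommMonoid M] [Module R M]
  [AddCommMonoid M'] [Module R M'] [AddCommMonoid N] [Module R N] [AddCommMonoid P] [Module R P]

theorem rTensor_mem_range_rTensor_subtype {a : M →ₗ[R] M'} {K : Submodule R M'}
    (ha : ∀ x, a x ∈ K) (v : M ⊗[R] N) :
    rTensor N a v ∈ range (rTensor N K.subtype) :=
  ⟨rTensor N (a.codRestrict K ha) v, by rw [← rTensor_comp_apply, subtype_comp_codRestrict]⟩

theorem rTensor_rTensor_subtype_of_eqOn {a : M →ₗ[R] M} {J : Submodule R M}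
    (ha : ∀ x ∈ J, a x = x) (y : J ⊗[R] N) :
    rTensor N a (rTensor N J.subtype y) = rTensor N J.subtype y := by
  rw [← rTensor_comp_apply, show a ∘ₗ J.subtype = J.subtype from ext fun x => ha x x.2]

theorem lTensor_rTensor_comm (a : M →ₗ[R] M') (τ : N →ₗ[R] P) (v : M ⊗[R] N) :
    lTensor M' τ (rTensor N a v) = rTensor P a (lTensor M τ v) := by
  rw [← comp_apply, ← comp_apply, lTensor_comp_rTensor, rTensor_comp_lTensor]

end LinearMap

theorem stmt16_general {X : Type*} [MeasurableSpace X] (μ : Measure X)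
    (p : ℝ≥0∞) [Fact (1 ≤ p)] (hp : p ≠ ∞)
    {G E : Type*} [AddCommGroup G] [Module ℝ G] [AddCommGroup E] [Module ℝ E]
    (NG : TensorProduct ℝ (Lp ℝ p μ) G → ℝ) (NE : TensorProduct ℝ (Lp ℝ p μ) E → ℝ)
    (hGcontr : ∀ (a : Lp ℝ p μ →L[ℝ] Lp ℝ p μ) u,
      NG (LinearMap.rTensor G (a : Lp ℝ p μ →ₗ[ℝ] Lp ℝ p μ) u) ≤ ‖a‖ * NG u)
    (τ : G →ₗ[ℝ] E)
    (honto : ∀ u, NE u ≤ 1 → ∃ v, NG v ≤ 1 ∧ LinearMap.lTensor (Lp ℝ p μ) τ v = u) :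
    ∀ u, u ∈ LinearMap.range (LinearMap.rTensor E (Lp0Sub μ p).subtype) → NE u ≤ 1 →
      ∃ v, v ∈ LinearMap.range (LinearMap.rTensor G (Lp0Sub μ p).subtype) ∧ NG v ≤ 1 ∧
        LinearMap.lTensor (Lp ℝ p μ) τ v = u := by
  rintro u ⟨u₀, rfl⟩ hNE
  obtain ⟨J, hJ, hJle, y, rfl⟩ := Submodule.exists_fg_le_eq_rTensor_inclusion u₀
  rw [← LinearMap.rTensor_comp_apply, Submodule.subtype_comp_inclusion] at hNE ⊢
  obtain ⟨a, ha1, hrange, hfix⟩ := exists_contraction_fixing_of_fg hp hJ hJle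
  obtain ⟨v, hv1, hv⟩ := honto _ hNE
  refine ⟨LinearMap.rTensor G (a : Lp ℝ p μ →ₗ[ℝ] Lp ℝ p μ) v,
    LinearMap.rTensor_mem_range_rTensor_subtype hrange v, ?_, ?_⟩
  · nlinarith [hGcontr a v, norm_nonneg a]
  · rw [LinearMap.lTensor_rTensor_comm, hv]
    exact LinearMap.rTensor_rTensor_subtype_of_eqOn hfix y

/-- Let `E, G` be `L_p(X)`-spaces, `1 ≤ p < ∞`, `X` σ-finite. If
`τ_∞ = 1 ⊗ τ` maps the closed unit ball of `L_p(X) ⊗ G` onto the closed unit ball of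
`L_p(X) ⊗ E`, then its restriction maps the closed unit ball of `L_p^0(X) ⊗ G` onto
the closed unit ball of `L_p^0(X) ⊗ E`. -/
theorem stmt16 {X : Type*} [MeasurableSpace X] (μ : Measure X) [SigmaFinite μ]
    (p : ℝ≥0∞) [Fact (1 ≤ p)] (hp : p ≠ ∞)
    {G E : Type*} [AddCommGroup G] [Module ℝ G] [AddCommGroup E] [Module ℝ E]
    (NG : TensorProduct ℝ (Lp ℝ p μ) G → ℝ) (NE : TensorProduct ℝ (Lp ℝ p μ) E → ℝ)
    (hGadd : ∀ u v, NG (u + v) ≤ NG u + NG v)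
    (hGsmul : ∀ (c : ℝ) u, NG (c • u) = |c| * NG u)
    (hGdef : ∀ u, NG u = 0 ↔ u = 0)
    (hGcontr : ∀ (a : Lp ℝ p μ →L[ℝ] Lp ℝ p μ) u,
      NG (LinearMap.rTensor G (a : Lp ℝ p μ →ₗ[ℝ] Lp ℝ p μ) u) ≤ ‖a‖ * NG u)
    (hEadd : ∀ u v, NE (u + v) ≤ NE u + NE v)
    (hEsmul : ∀ (c : ℝ) u, NE (c • u) = |c| * NE u)
    (hEdef : ∀ u, NE u = 0 ↔ u = 0)
    (hEcontr : ∀ (a : Lp ℝ p μ →L[ℝ] Lp ℝ p μ) u,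
      NE (LinearMap.rTensor E (a : Lp ℝ p μ →ₗ[ℝ] Lp ℝ p μ) u) ≤ ‖a‖ * NE u)
    (τ : G →ₗ[ℝ] E)
    (honto : ∀ u, NE u ≤ 1 → ∃ v, NG v ≤ 1 ∧ LinearMap.lTensor (Lp ℝ p μ) τ v = u) :
    ∀ u, u ∈ LinearMap.range (LinearMap.rTensor E (Lp0Sub μ p).subtype) → NE u ≤ 1 →
      ∃ v, v ∈ LinearMap.range (LinearMap.rTensor G (Lp0Sub μ p).subtype) ∧ NG v ≤ 1 ∧
        LinearMap.lTensor (Lp ℝ p μ) τ v = u :=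
  stmt16_general μ p hp NG NE hGcontr τ honto
end

section
/- Let X be a σ-finite measure space, 1 ≤ p < ∞, E, G L_p(X)-spaces, and τ : G → E a linear map such that τ_∞ maps the open unit ball of L_p^0(X) ⊗ G onto the open unit ball of L_p^0(X) ⊗ E, and τ : G → E is surjective with the lifting property for elements of G. Then τ_∞ maps the open unit ball of L_p(X) ⊗ G onto the open unit ball of L_p(X) ⊗ E. -/
open MeasureTheory
open scoped ENNReal

/-!
Simple functions are dense in `L_p`, and the contraction property makes `ξ ↦ N (ξ ⊗ x)`
continuous for each fixed `x`: it is bounded by `‖ξ‖ N (ξ₀ ⊗ x)`, through the rank-one operator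
`φ(·) ξ` with `φ` a norming functional of `ξ₀`. Hence every `u ∈ L_p ⊗ E` splits as `u₀ + (u - u₀)`
with `u₀ ∈ L_p^0 ⊗ E` and `u - u₀` small together with a lift to `L_p ⊗ G`, built term by term from
arbitrary preimages under `τ`. Lifting a rescaled `u₀` inside the unit ball of `L_p^0 ⊗ G` and
adding the small lift gives a lift of `u` in the open unit ball.
-/

open TensorProduct

theorem indicatorConstLp_mem_Lp0Sub {X : Type*} [MeasurableSpace X] {μ : Measure X}
    {p : ℝ≥0∞} [Fact (1 ≤ p)] {s : Set X} (hs : MeasurableSet s) (hμs : μ s ≠ ∞) (c : ℝ) :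
    indicatorConstLp p hs hμs c ∈ Lp0Sub μ p := by
  have hc : indicatorConstLp p hs hμs c = c • indicatorConstLp p hs hμs (1 : ℝ) := by
    refine Lp.ext ?_
    filter_upwards [indicatorConstLp_coeFn (p := p) (hs := hs) (hμs := hμs) (c := c),
      Lp.coeFn_smul c (indicatorConstLp p hs hμs (1 : ℝ)),
      indicatorConstLp_coeFn (p := p) (hs := hs) (hμs := hμs) (c := (1 : ℝ))] with a hca hsmul h1
    rw [hca, hsmul, Pi.smul_apply, h1, ← Set.indicator_const_smul_apply, smul_eq_mul, mul_one]
  exact hc ▸ Submodule.smul_mem _ c (Submodule.subset_span ⟨s, hs, hμs, rfl⟩)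

theorem dense_Lp0Sub {X : Type*} [MeasurableSpace X] (μ : Measure X)
    {p : ℝ≥0∞} [Fact (1 ≤ p)] (hp : p ≠ ∞) : Dense (Lp0Sub μ p : Set (Lp ℝ p μ)) :=
  fun ξ => Lp.induction hp (· ∈ closure (Lp0Sub μ p : Set (Lp ℝ p μ)))
    (fun c _ hs hμs => subset_closure (indicatorConstLp_mem_Lp0Sub hs hμs.ne c))
    (fun _ _ _ _ _ hf hg => (Lp0Sub μ p).topologicalClosure.add_mem hf hg) isClosed_closure ξ

theorem apply_tmul_le_mul_norm_of_contractive {𝕜 V E : Type*} [RCLike 𝕜]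
    [NormedAddCommGroup V] [NormedSpace 𝕜 V] [AddCommGroup E] [Module 𝕜 E]
    {N : V ⊗[𝕜] E → ℝ} (hN : ∀ (a : V →L[𝕜] V) u, N ((a : V →ₗ[𝕜] V).rTensor E u) ≤ ‖a‖ * N u)
    {ξ₀ : V} (hξ₀ : ‖ξ₀‖ = 1) (ξ : V) (x : E) : N (ξ ⊗ₜ x) ≤ N (ξ₀ ⊗ₜ x) * ‖ξ‖ := by
  obtain ⟨φ, hφ, hφξ₀⟩ := exists_dual_vector 𝕜 ξ₀ (by simp [hξ₀])
  simpa [hφξ₀, hξ₀, ContinuousLinearMap.norm_smulRight_apply, hφ, mul_comm] using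
    hN (φ.smulRight ξ) (ξ₀ ⊗ₜ x)

theorem continuous_apply_tmul_of_contractive {𝕜 V E : Type*} [RCLike 𝕜]
    [NormedAddCommGroup V] [NormedSpace 𝕜 V] [AddCommGroup E] [Module 𝕜 E]
    {N : Seminorm 𝕜 (V ⊗[𝕜] E)}
    (hN : ∀ (a : V →L[𝕜] V) u, N ((a : V →ₗ[𝕜] V).rTensor E u) ≤ ‖a‖ * N u)
    {ξ₀ : V} (hξ₀ : ‖ξ₀‖ = 1) (x : E) : Continuous fun ξ : V => N (ξ ⊗ₜ x) := by
  refine Seminorm.continuous_of_le (p := N.comp ((TensorProduct.mk 𝕜 V E).flip x))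
    (q := (N (ξ₀ ⊗ₜ x)).toNNReal • normSeminorm 𝕜 V) ?_ fun ξ => ?_
  · simp only [FunLike.coe_smul, coe_normSeminorm]
    fun_prop
  · simpa [NNReal.smul_def, Real.coe_toNNReal _ (apply_nonneg N _)] using
      apply_tmul_le_mul_norm_of_contractive hN hξ₀ ξ x

theorem exists_close_mem_range_rTensor_of_dense {𝕜 V E G : Type*} [NormedField 𝕜]
    [AddCommGroup V] [Module 𝕜 V] [TopologicalSpace V] [IsTopologicalAddGroup V]
    [AddCommGroup E] [Module 𝕜 E] [AddCommGroup G] [Module 𝕜 G]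
    {W : Submodule 𝕜 V} (hW : Dense (W : Set V))
    {NE : Seminorm 𝕜 (V ⊗[𝕜] E)} {NG : Seminorm 𝕜 (V ⊗[𝕜] G)}
    (hE : ∀ x, Continuous fun ξ : V => NE (ξ ⊗ₜ x))
    (hG : ∀ y, Continuous fun ξ : V => NG (ξ ⊗ₜ y))
    {τ : G →ₗ[𝕜] E} (hτ : Function.Surjective τ) (u : V ⊗[𝕜] E) {ε : ℝ} (hε : 0 < ε) :
    ∃ u₀ ∈ LinearMap.range (W.subtype.rTensor E), ∃ v₁,
      NE (u - u₀) < ε ∧ NG v₁ < ε ∧ τ.lTensor V v₁ = u - u₀ := by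
  induction u using TensorProduct.induction_on generalizing ε with
  | zero => exact ⟨0, zero_mem _, 0, by simpa using hε, by simpa using hε, by simp⟩
  | tmul ξ x =>
    obtain ⟨y, rfl⟩ := hτ x
    have hopen : IsOpen {ξ' | NE ((ξ - ξ') ⊗ₜ τ y) < ε ∧ NG ((ξ - ξ') ⊗ₜ y) < ε} :=
      (isOpen_lt ((hE _).comp (continuous_sub_left ξ)) continuous_const).inter
        (isOpen_lt ((hG _).comp (continuous_sub_left ξ)) continuous_const)
    obtain ⟨ξ', hξ'W, hNE, hNG⟩ := hW.exists_mem_open hopen ⟨ξ, by simpa using hε⟩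
    refine ⟨ξ' ⊗ₜ τ y, ⟨⟨ξ', hξ'W⟩ ⊗ₜ τ y, rfl⟩, (ξ - ξ') ⊗ₜ y, ?_, hNG, ?_⟩
    · rwa [← sub_tmul]
    · simp [sub_tmul]
  | add u u' hu hu' =>
    obtain ⟨u₀, hu₀, v₁, hNE, hNG, hτv₁⟩ := hu (half_pos hε)
    obtain ⟨u₀', hu₀', v₁', hNE', hNG', hτv₁'⟩ := hu' (half_pos hε)
    refine ⟨u₀ + u₀', add_mem hu₀ hu₀', v₁ + v₁', ?_, ?_, ?_⟩
    · have := map_add_le_add NE (u - u₀) (u' - u₀')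
      rw [add_sub_add_comm]
      linarith
    · linarith [map_add_le_add NG v₁ v₁']
    · rw [map_add, hτv₁, hτv₁', add_sub_add_comm]

theorem exists_lift_of_lift_ball {M N : Type*} [AddCommGroup M] [Module ℝ M]
    [AddCommGroup N] [Module ℝ N] {pM : Seminorm ℝ M} {pN : Seminorm ℝ N} {f : M →ₗ[ℝ] N}
    {S : Submodule ℝ N} (hS : ∀ u ∈ S, pN u < 1 → ∃ v, pM v < 1 ∧ f v = u)
    {u u₀ : N} (hu₀ : u₀ ∈ S) {v₁ : M} (hv₁ : f v₁ = u - u₀) (h : pN u₀ + pM v₁ < 1) :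
    ∃ v, pM v < 1 ∧ f v = u := by
  obtain ⟨r, hr, hr₁⟩ := exists_between (lt_sub_iff_add_lt.2 h)
  have hr₀ : 0 < r := (apply_nonneg pN u₀).trans_lt hr
  obtain ⟨v₀, hv₀, hfv₀⟩ := hS (r⁻¹ • u₀) (S.smul_mem _ hu₀) <| by
    rwa [map_smul_eq_mul, Real.norm_of_nonneg (inv_nonneg.2 hr₀.le), inv_mul_lt_one₀ hr₀]
  refine ⟨r • v₀ + v₁, ?_, by rw [map_add, map_smul, hfv₀, smul_inv_smul₀ hr₀.ne', hv₁,
    add_sub_cancel]⟩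
  calc pM (r • v₀ + v₁) ≤ r * pM v₀ + pM v₁ := by
        simpa [map_smul_eq_mul, Real.norm_of_nonneg hr₀.le] using map_add_le_add pM (r • v₀) v₁
    _ < r + pM v₁ := by gcongr; exact mul_lt_of_lt_one_right hr₀ hv₀
    _ < 1 := by linarith

theorem stmt17_general {X : Type*} [MeasurableSpace X] (μ : Measure X)
    (p : ℝ≥0∞) [Fact (1 ≤ p)] (hp : p ≠ ∞)
    {G E : Type*} [AddCommGroup G] [Module ℝ G] [AddCommGroup E] [Module ℝ E]
    (NG : TensorProduct ℝ (Lp ℝ p μ) G → ℝ) (NE : TensorProduct ℝ (Lp ℝ p μ) E → ℝ)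
    (hGadd : ∀ u v, NG (u + v) ≤ NG u + NG v)
    (hGsmul : ∀ (c : ℝ) u, NG (c • u) = |c| * NG u)
    (hGcontr : ∀ (a : Lp ℝ p μ →L[ℝ] Lp ℝ p μ) u,
      NG (LinearMap.rTensor G (a : Lp ℝ p μ →ₗ[ℝ] Lp ℝ p μ) u) ≤ ‖a‖ * NG u)
    (hEadd : ∀ u v, NE (u + v) ≤ NE u + NE v)
    (hEsmul : ∀ (c : ℝ) u, NE (c • u) = |c| * NE u)
    (hEcontr : ∀ (a : Lp ℝ p μ →L[ℝ] Lp ℝ p μ) u,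
      NE (LinearMap.rTensor E (a : Lp ℝ p μ →ₗ[ℝ] Lp ℝ p μ) u) ≤ ‖a‖ * NE u)
    (ξ₀ : Lp ℝ p μ) (hξ₀ : ‖ξ₀‖ = 1)
    (τ : G →ₗ[ℝ] E)
    -- the lifting property for elements of `G`
    (hlift : ∀ (x : E) (δ : ℝ), 0 < δ →
      ∃ y : G, τ y = x ∧ NG (ξ₀ ⊗ₜ[ℝ] y) ≤ NE (ξ₀ ⊗ₜ[ℝ] x) + δ)
    -- `τ_∞` maps the open unit ball of `L_p^0(X) ⊗ G` onto that of `L_p^0(X) ⊗ E`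
    (h0onto : ∀ u, u ∈ LinearMap.range (LinearMap.rTensor E (Lp0Sub μ p).subtype) →
      NE u < 1 →
      ∃ v, v ∈ LinearMap.range (LinearMap.rTensor G (Lp0Sub μ p).subtype) ∧ NG v < 1 ∧
        LinearMap.lTensor (Lp ℝ p μ) τ v = u) :
    ∀ u, NE u < 1 → ∃ v, NG v < 1 ∧ LinearMap.lTensor (Lp ℝ p μ) τ v = u := by
  let NE' : Seminorm ℝ _ := .of NE hEadd fun c u => by rw [hEsmul, Real.norm_eq_abs]
  let NG' : Seminorm ℝ _ := .of NG hGadd fun c u => by rw [hGsmul, Real.norm_eq_abs]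
  have hτ : Function.Surjective τ := fun x => (hlift x 1 one_pos).imp fun _ h => h.1
  intro u (hu : NE' u < 1)
  obtain ⟨u₀, hu₀, v₁, hNE, hNG, hτv₁⟩ := exists_close_mem_range_rTensor_of_dense
    (dense_Lp0Sub μ hp) (NE := NE') (NG := NG')
    (continuous_apply_tmul_of_contractive hEcontr hξ₀)
    (continuous_apply_tmul_of_contractive hGcontr hξ₀) hτ u (ε := (1 - NE' u) / 2) (by linarith)
  refine exists_lift_of_lift_ball (pM := NG') (pN := NE')
    (fun w hw hw₁ => (h0onto w hw hw₁).imp fun _ h => h.2) hu₀ hτv₁ ?_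
  have := sub_sub_cancel u u₀ ▸ map_sub_le_add NE' u (u - u₀)
  linarith

/-- Let `E, G` be `L_p(X)`-spaces (`1 ≤ p < ∞`, `X` σ-finite) and
`τ : G → E` a linear map such that `τ_∞` maps the open unit ball of `L_p^0(X) ⊗ G` onto
the open unit ball of `L_p^0(X) ⊗ E`, and `τ` is surjective with the lifting property
for elements. Then `τ_∞` maps the open unit ball of `L_p(X) ⊗ G` onto the open unit
ball of `L_p(X) ⊗ E`. -/
theorem stmt17 {X : Type*} [MeasurableSpace X] (μ : Measure X) [SigmaFinite μ]
    (p : ℝ≥0∞) [Fact (1 ≤ p)] (hp : p ≠ ∞)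
    {G E : Type*} [AddCommGroup G] [Module ℝ G] [AddCommGroup E] [Module ℝ E]
    (NG : TensorProduct ℝ (Lp ℝ p μ) G → ℝ) (NE : TensorProduct ℝ (Lp ℝ p μ) E → ℝ)
    (hGadd : ∀ u v, NG (u + v) ≤ NG u + NG v)
    (hGsmul : ∀ (c : ℝ) u, NG (c • u) = |c| * NG u)
    (hGdef : ∀ u, NG u = 0 ↔ u = 0)
    (hGcontr : ∀ (a : Lp ℝ p μ →L[ℝ] Lp ℝ p μ) u,
      NG (LinearMap.rTensor G (a : Lp ℝ p μ →ₗ[ℝ] Lp ℝ p μ) u) ≤ ‖a‖ * NG u)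
    (hEadd : ∀ u v, NE (u + v) ≤ NE u + NE v)
    (hEsmul : ∀ (c : ℝ) u, NE (c • u) = |c| * NE u)
    (hEdef : ∀ u, NE u = 0 ↔ u = 0)
    (hEcontr : ∀ (a : Lp ℝ p μ →L[ℝ] Lp ℝ p μ) u,
      NE (LinearMap.rTensor E (a : Lp ℝ p μ →ₗ[ℝ] Lp ℝ p μ) u) ≤ ‖a‖ * NE u)
    (ξ₀ : Lp ℝ p μ) (hξ₀ : ‖ξ₀‖ = 1)
    (τ : G →ₗ[ℝ] E)
    -- the lifting property for elements of `G`
    (hlift : ∀ (x : E) (δ : ℝ), 0 < δ →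
      ∃ y : G, τ y = x ∧ NG (ξ₀ ⊗ₜ[ℝ] y) ≤ NE (ξ₀ ⊗ₜ[ℝ] x) + δ)
    -- `τ_∞` maps the open unit ball of `L_p^0(X) ⊗ G` onto that of `L_p^0(X) ⊗ E`
    (h0onto : ∀ u, u ∈ LinearMap.range (LinearMap.rTensor E (Lp0Sub μ p).subtype) →
      NE u < 1 →
      ∃ v, v ∈ LinearMap.range (LinearMap.rTensor G (Lp0Sub μ p).subtype) ∧ NG v < 1 ∧
        LinearMap.lTensor (Lp ℝ p μ) τ v = u) :
    ∀ u, NE u < 1 → ∃ v, NG v < 1 ∧ LinearMap.lTensor (Lp ℝ p μ) τ v = u :=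
  stmt17_general μ p hp NG NE hGadd hGsmul hGcontr hEadd hEsmul hEcontr ξ₀ hξ₀ τ hlift h0onto
end
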